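/- arXiv:2106.01025 — 6 statements merged into one kernel-verified Lean document; each statement's English description precedes it below -/
import Mathlib

section
/- Let 0 < r < R, h = R − r, ρ > 0, η > 0, and χ_max ∈ [−1, 1), and set D_max = √(R² + r² − 2rRχ_max). Then the integral ρR² ∫_{χ_max}^{1} (1 − χ²)(1 + η(R² + r² − 2rRχ)) / (R² + r² − 2rRχ)³ dχ equals (ρ/(16 r³ R)) · [ 4(2η(r² + R²) − 1)·ln(D_max/h) + (2η(r² − R²)² − 4(r² + R²))·(h² − D_max²)/(D_max² h²) − 4ηrR(1 − χ_max) + (r² − R²)²·(h⁴ − D_max⁴)/(D_max⁴ h⁴) ]. -/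
/-!
Substitute the squared distance `u = R² + r² - 2rRχ`. Then
`1 - χ² = (u - (R - r)²) ((R + r)² - u) / (4r²R²)`, so the integrand becomes the rational function
`(u - a)(b - u)(1 + ηu) / u³` with `a = (R - r)²`, `b = (R + r)²`, whose partial fractions
`-η + (η(a + b) - 1)/u + (a + b - ηab)/u² - ab/u³` integrate in closed form. Evaluating between
`u = h²` and `u = D_max²` gives the formula.
-/

open Real

abbrev sqDist (r R χ : ℝ) : ℝ := R ^ 2 + r ^ 2 - 2 * r * R * χ

noncomputable def rssPrimitive (a b η u : ℝ) : ℝ :=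
  -η * u + (η * (a + b) - 1) * log u - (a + b - η * a * b) / u + a * b / (2 * u ^ 2)

theorem hasDerivAt_rssPrimitive (a b η : ℝ) {u : ℝ} (hu : u ≠ 0) :
    HasDerivAt (rssPrimitive a b η) ((u - a) * (b - u) * (1 + η * u) / u ^ 3) u := by
  have hid := hasDerivAt_id' u
  have H := (((hid.const_mul (-η)).add ((hasDerivAt_log hu).const_mul (η * (a + b) - 1))).sub
    ((hasDerivAt_const u (a + b - η * a * b)).div hid hu)).add
    ((hasDerivAt_const u (a * b)).div ((hasDerivAt_pow 2 u).const_mul 2)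
      (mul_ne_zero two_ne_zero (pow_ne_zero 2 hu)))
  refine H.congr_deriv ?_
  field_simp
  ring

theorem sub_sq_le_sqDist {r R χ : ℝ} (hrR : 0 ≤ r * R) (hχ : χ ≤ 1) :
    (R - r) ^ 2 ≤ sqDist r R χ := by
  nlinarith [mul_le_mul_of_nonneg_left hχ hrR]

theorem one_sub_sq_eq_sqDist {r R : ℝ} (hr : r ≠ 0) (hR : R ≠ 0) (χ : ℝ) :
    1 - χ ^ 2 = (sqDist r R χ - (R - r) ^ 2) * ((R + r) ^ 2 - sqDist r R χ) /
      (4 * r ^ 2 * R ^ 2) := by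
  field_simp
  ring

theorem integral_one_sub_sq_mul_div_sqDist_pow_three {r R c : ℝ} (η : ℝ) (hrR : 0 < r * R)
    (hne : r ≠ R) (hc : c ≤ 1) :
    ∫ χ in c..1, (1 - χ ^ 2) * (1 + η * sqDist r R χ) / sqDist r R χ ^ 3
      = (rssPrimitive ((R - r) ^ 2) ((R + r) ^ 2) η (sqDist r R c)
          - rssPrimitive ((R - r) ^ 2) ((R + r) ^ 2) η ((R - r) ^ 2)) / (8 * r ^ 3 * R ^ 3) := by
  have hr : r ≠ 0 := left_ne_zero_of_mul hrR.ne'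
  have hR : R ≠ 0 := right_ne_zero_of_mul hrR.ne'
  have hpos : ∀ χ ∈ Set.uIcc c 1, 0 < sqDist r R χ := fun χ hχ =>
    (sq_pos_of_ne_zero (sub_ne_zero.mpr hne.symm)).trans_le
      (sub_sq_le_sqDist hrR.le (Set.uIcc_of_le hc ▸ hχ).2)
  have hderiv : ∀ χ ∈ Set.uIcc c 1, HasDerivAt
      (fun χ => -rssPrimitive ((R - r) ^ 2) ((R + r) ^ 2) η (sqDist r R χ)
        / (8 * r ^ 3 * R ^ 3))
      ((1 - χ ^ 2) * (1 + η * sqDist r R χ) / sqDist r R χ ^ 3) χ := by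
    intro χ hχ
    have hu : HasDerivAt (sqDist r R) (-(2 * r * R)) χ := by
      simpa using ((hasDerivAt_id χ).const_mul (2 * r * R)).const_sub (R ^ 2 + r ^ 2)
    refine (((hasDerivAt_rssPrimitive _ _ η (hpos χ hχ).ne').comp χ hu).neg.div_const _
      ).congr_deriv ?_
    rw [one_sub_sq_eq_sqDist hr hR χ]
    field_simp
    ring
  have hcont : ContinuousOn (fun χ => (1 - χ ^ 2) * (1 + η * sqDist r R χ) / sqDist r R χ ^ 3)
      (Set.uIcc c 1) :=
    ContinuousOn.div (by fun_prop) (by fun_prop) fun χ hχ => pow_ne_zero 3 (hpos χ hχ).ne'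
  rw [intervalIntegral.integral_eq_sub_of_hasDerivAt hderiv hcont.intervalIntegrable,
    show sqDist r R 1 = (R - r) ^ 2 by ring]
  ring

theorem rss_xy_integral_general
    (r R h ρ η χmax Dmax : ℝ)
    (hr : 0 < r) (hrR : r < R) (hh : h = R - r)
    (hχ2 : χmax < 1)
    (hD : Dmax = Real.sqrt (R ^ 2 + r ^ 2 - 2 * r * R * χmax)) :
    ρ * R ^ 2 *
        ∫ χ in χmax..1,
          (1 - χ ^ 2) * (1 + η * (R ^ 2 + r ^ 2 - 2 * r * R * χ)) /
            (R ^ 2 + r ^ 2 - 2 * r * R * χ) ^ 3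
      = ρ / (16 * r ^ 3 * R) *
          (4 * (2 * η * (r ^ 2 + R ^ 2) - 1) * Real.log (Dmax / h)
            + (2 * η * (r ^ 2 - R ^ 2) ^ 2 - 4 * (r ^ 2 + R ^ 2)) *
                (h ^ 2 - Dmax ^ 2) / (Dmax ^ 2 * h ^ 2)
            - 4 * η * r * R * (1 - χmax)
            + (r ^ 2 - R ^ 2) ^ 2 * (h ^ 4 - Dmax ^ 4) / (Dmax ^ 4 * h ^ 4)) := by
  subst hh
  have hR : 0 < R := hr.trans hrR
  have hRr : 0 < R - r := sub_pos.mpr hrR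
  have hdist : 0 < sqDist r R χmax :=
    (pow_pos hRr 2).trans_le (sub_sq_le_sqDist (mul_pos hr hR).le hχ2.le)
  have hDsq : Dmax ^ 2 = sqDist r R χmax := by rw [hD, sq_sqrt hdist.le]
  have hD0 : 0 < Dmax := hD ▸ sqrt_pos.mpr hdist
  have hχmax : χmax = (R ^ 2 + r ^ 2 - Dmax ^ 2) / (2 * r * R) := by
    field_simp
    linarith
  rw [integral_one_sub_sq_mul_div_sqDist_pow_three η (mul_pos hr hR) hrR.ne hχ2.le, ← hDsq,
    rssPrimitive, rssPrimitive, log_div hD0.ne' hRr.ne', log_pow, log_pow, hχmax]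
  field_simp
  ring

/-- closed form of the RSS horizontal-FIM integral. -/
theorem rss_xy_integral
    (r R h ρ η χmax Dmax : ℝ)
    (hr : 0 < r) (hrR : r < R) (hh : h = R - r)
    (hρ : 0 < ρ) (hη : 0 < η)
    (hχ1 : -1 ≤ χmax) (hχ2 : χmax < 1)
    (hD : Dmax = Real.sqrt (R ^ 2 + r ^ 2 - 2 * r * R * χmax)) :
    ρ * R ^ 2 *
        ∫ χ in χmax..1,
          (1 - χ ^ 2) * (1 + η * (R ^ 2 + r ^ 2 - 2 * r * R * χ)) /
            (R ^ 2 + r ^ 2 - 2 * r * R * χ) ^ 3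
      = ρ / (16 * r ^ 3 * R) *
          (4 * (2 * η * (r ^ 2 + R ^ 2) - 1) * Real.log (Dmax / h)
            + (2 * η * (r ^ 2 - R ^ 2) ^ 2 - 4 * (r ^ 2 + R ^ 2)) *
                (h ^ 2 - Dmax ^ 2) / (Dmax ^ 2 * h ^ 2)
            - 4 * η * r * R * (1 - χmax)
            + (r ^ 2 - R ^ 2) ^ 2 * (h ^ 4 - Dmax ^ 4) / (Dmax ^ 4 * h ^ 4)) :=
  rss_xy_integral_general r R h ρ η χmax Dmax hr hrR hh hχ2 hD
end

section
/- Let 0 < r < R, h = R − r, ρ > 0, η > 0, and χ_max ∈ [−1, 1), and set D_max = √(R² + r² − 2rRχ_max). Then ρ ∫_{χ_max}^{1} (1 + η(R² + r² − 2rRχ))·(Rχ − r)² / (R² + r² − 2rRχ)³ dχ equals (ρ/(16 r³ R)) · [ 2(r² − R²)(η(r² − R²) + 2)·(D_max² − h²)/(h² D_max²) − 4(2η(R² − r²) − 1)·ln(D_max/h) + 4ηrR(1 − χ_max) + (r² − R²)²·(D_max⁴ − h⁴)/(h⁴ D_max⁴) ]. -/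
/-!
Substitute the squared distance `u = R² + r² - 2rRχ`, which runs from `h²` to `Dmax²` as `χ`
runs from `1` down to `χmax`. Since `Rχ - r = (a - u) / (2r)` with `a = R² - r²`, the integrand
becomes `(1 + ηu)(a - u)² / u³ / (4r²)`, a rational function of `u` with an elementary primitive
(partial fractions `a²/u³ + (ηa² - 2a)/u² + (1 - 2aη)/u + η`).
-/

open Real

noncomputable def cubicRationalPrimitive (a η u : ℝ) : ℝ :=
  -a ^ 2 / (2 * u ^ 2) + (2 * a - η * a ^ 2) / u + (1 - 2 * a * η) * log u + η * u

theorem hasDerivAt_cubicRationalPrimitive (a η : ℝ) {u : ℝ} (hu : u ≠ 0) :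
    HasDerivAt (cubicRationalPrimitive a η) ((1 + η * u) * (a - u) ^ 2 / u ^ 3) u := by
  have H := ((((hasDerivAt_const u (-a ^ 2)).div ((hasDerivAt_pow 2 u).const_mul 2)
    (by simp [hu])).add ((hasDerivAt_const u (2 * a - η * a ^ 2)).div (hasDerivAt_id' u) hu)).add
    ((hasDerivAt_log hu).const_mul (1 - 2 * a * η))).add ((hasDerivAt_id' u).const_mul η)
  refine H.congr_deriv ?_
  field_simp
  ring

theorem integral_one_add_mul_mul_sub_sq_div_cube (a η : ℝ) {s t : ℝ} (hs : 0 < s) (ht : 0 < t) :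
    ∫ u in s..t, (1 + η * u) * (a - u) ^ 2 / u ^ 3
      = cubicRationalPrimitive a η t - cubicRationalPrimitive a η s := by
  have hpos : ∀ u ∈ Set.uIcc s t, u ≠ 0 := fun u hu => (lt_of_lt_of_le (lt_min hs ht) hu.1).ne'
  refine intervalIntegral.integral_eq_sub_of_hasDerivAt
    (fun u hu => hasDerivAt_cubicRationalPrimitive a η (hpos u hu)) ?_
  exact ContinuousOn.intervalIntegrable <| ContinuousOn.div (by fun_prop) (by fun_prop)
    fun u hu => pow_ne_zero 3 (hpos u hu)

theorem sq_sub_le_sq_add_sq_sub_mul {r R χ : ℝ} (hrR : 0 ≤ r * R) (hχ : χ ≤ 1) :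
    (R - r) ^ 2 ≤ R ^ 2 + r ^ 2 - 2 * r * R * χ := by
  nlinarith

theorem mul_sub_eq_sub_div {r R χ : ℝ} (hr : r ≠ 0) :
    R * χ - r = (R ^ 2 - r ^ 2 - (R ^ 2 + r ^ 2 - 2 * r * R * χ)) / (2 * r) := by
  field_simp
  ring

theorem rss_z_integral_general
    (r R h ρ η χmax Dmax : ℝ)
    (hr : 0 < r) (hrR : r < R) (hh : h = R - r)
    (hχ2 : χmax < 1)
    (hD : Dmax = Real.sqrt (R ^ 2 + r ^ 2 - 2 * r * R * χmax)) :
    ρ *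
        ∫ χ in χmax..1,
          (1 + η * (R ^ 2 + r ^ 2 - 2 * r * R * χ)) * (R * χ - r) ^ 2 /
            (R ^ 2 + r ^ 2 - 2 * r * R * χ) ^ 3
      = ρ / (16 * r ^ 3 * R) *
          (2 * (r ^ 2 - R ^ 2) * (η * (r ^ 2 - R ^ 2) + 2) *
              (Dmax ^ 2 - h ^ 2) / (h ^ 2 * Dmax ^ 2)
            - 4 * (2 * η * (R ^ 2 - r ^ 2) - 1) * Real.log (Dmax / h)
            + 4 * η * r * R * (1 - χmax)
            + (r ^ 2 - R ^ 2) ^ 2 * (Dmax ^ 4 - h ^ 4) / (h ^ 4 * Dmax ^ 4)) := by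
  have hR : 0 < R := hr.trans hrR
  have hh0 : 0 < h := by linarith
  have hrR0 : 0 ≤ r * R := by positivity
  have hDsq : Dmax ^ 2 = R ^ 2 + r ^ 2 - 2 * r * R * χmax := by
    rw [hD, sq_sqrt ((sq_nonneg _).trans (sq_sub_le_sq_add_sq_sub_mul hrR0 hχ2.le))]
  have hD0 : 0 < Dmax := by
    rw [hD, sqrt_pos]
    exact (pow_pos (sub_pos.2 hrR) 2).trans_le (sq_sub_le_sq_add_sq_sub_mul hrR0 hχ2.le)
  set g : ℝ → ℝ := fun u => (1 + η * u) * (R ^ 2 - r ^ 2 - u) ^ 2 / u ^ 3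
  have hintegrand : ∀ χ, (1 + η * (R ^ 2 + r ^ 2 - 2 * r * R * χ)) * (R * χ - r) ^ 2 /
      (R ^ 2 + r ^ 2 - 2 * r * R * χ) ^ 3 = (4 * r ^ 2)⁻¹ * g (R ^ 2 + r ^ 2 - 2 * r * R * χ) := by
    intro χ
    rw [mul_sub_eq_sub_div hr.ne']
    ring
  have hh2 : R ^ 2 + r ^ 2 - 2 * r * R * 1 = h ^ 2 := by rw [hh]; ring
  rw [intervalIntegral.integral_congr fun χ _ => hintegrand χ, intervalIntegral.integral_const_mul,
    intervalIntegral.integral_comp_sub_mul g (by positivity), hh2, ← hDsq, smul_eq_mul,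
    integral_one_add_mul_mul_sub_sq_div_cube _ _ (by positivity) (by positivity),
    cubicRationalPrimitive, cubicRationalPrimitive, log_div hD0.ne' hh0.ne', log_pow, log_pow]
  have hχ : χmax = (R ^ 2 + r ^ 2 - Dmax ^ 2) / (2 * r * R) := by
    field_simp; linarith
  rw [hχ]
  subst hh
  field_simp
  ring

/-- closed form of the RSS vertical-FIM integral. -/
theorem rss_z_integral
    (r R h ρ η χmax Dmax : ℝ)
    (hr : 0 < r) (hrR : r < R) (hh : h = R - r)
    (hρ : 0 < ρ) (hη : 0 < η)
    (hχ1 : -1 ≤ χmax) (hχ2 : χmax < 1)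
    (hD : Dmax = Real.sqrt (R ^ 2 + r ^ 2 - 2 * r * R * χmax)) :
    ρ *
        ∫ χ in χmax..1,
          (1 + η * (R ^ 2 + r ^ 2 - 2 * r * R * χ)) * (R * χ - r) ^ 2 /
            (R ^ 2 + r ^ 2 - 2 * r * R * χ) ^ 3
      = ρ / (16 * r ^ 3 * R) *
          (2 * (r ^ 2 - R ^ 2) * (η * (r ^ 2 - R ^ 2) + 2) *
              (Dmax ^ 2 - h ^ 2) / (h ^ 2 * Dmax ^ 2)
            - 4 * (2 * η * (R ^ 2 - r ^ 2) - 1) * Real.log (Dmax / h)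
            + 4 * η * r * R * (1 - χmax)
            + (r ^ 2 - R ^ 2) ^ 2 * (Dmax ^ 4 - h ^ 4) / (h ^ 4 * Dmax ^ 4)) :=
  rss_z_integral_general r R h ρ η χmax Dmax hr hrR hh hχ2 hD
end

section
/- Let r > 0, h > 0, set R = r + h, let ρ > 0, η > 0, χ_max ∈ [−1, 1), and set D_max = √(R² + r² − 2rRχ_max). Then ρη R² ∫_{χ_max}^{1} (1 − χ²)/(R² + r² − 2rRχ)² dχ equals 2ρη · [ ln(D_max/h)·((r + h)² + r²)/(4 r³ (r + h)) − (1 − χ_max)·(D_max² + r(r + h)(1 + χ_max))/(4 r² D_max²) ]. -/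
/-!
With `q(χ) = a - bχ`, `a = R² + r²`, `b = 2rR`, the integrand has the elementary primitive
`-(a² - b²)/(b³ q) - (2a/b³) log q - χ/b²`. Since `q(1) = h²` and `q(χmax) = Dmax²`, the
fundamental theorem of calculus turns the logarithms into `2 log (Dmax / h)`, and the rest is
algebra (note `a² - b² = (R² - r²)²`).
-/

open Real

noncomputable def primitiveOneSubSqDivSq (a b x : ℝ) : ℝ :=
  -(a ^ 2 - b ^ 2) / (b ^ 3 * (a - b * x)) - 2 * a / b ^ 3 * log (a - b * x) - x / b ^ 2

theorem hasDerivAt_primitiveOneSubSqDivSq {a b x : ℝ} (hb : b ≠ 0) (hx : a - b * x ≠ 0) :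
    HasDerivAt (primitiveOneSubSqDivSq a b) ((1 - x ^ 2) / (a - b * x) ^ 2) x := by
  have hq : HasDerivAt (fun x : ℝ => a - b * x) (-b) x := by
    simpa using ((hasDerivAt_id x).const_mul b).const_sub a
  have hsum := (((hasDerivAt_const x (-(a ^ 2 - b ^ 2))).div (hq.const_mul (b ^ 3))
    (mul_ne_zero (pow_ne_zero 3 hb) hx)).sub ((hq.log hx).const_mul (2 * a / b ^ 3))).sub
    ((hasDerivAt_id x).div_const (b ^ 2))
  refine hsum.congr_deriv ?_
  field_simp
  ring

theorem integral_one_sub_sq_div_sq {a b x₀ x₁ : ℝ} (hb : b ≠ 0)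
    (hx : ∀ x ∈ Set.uIcc x₀ x₁, a - b * x ≠ 0) :
    ∫ x in x₀..x₁, (1 - x ^ 2) / (a - b * x) ^ 2
      = primitiveOneSubSqDivSq a b x₁ - primitiveOneSubSqDivSq a b x₀ := by
  refine intervalIntegral.integral_eq_sub_of_hasDerivAt
    (fun x hx' => hasDerivAt_primitiveOneSubSqDivSq hb (hx x hx')) ?_
  refine ContinuousOn.intervalIntegrable (ContinuousOn.div (by fun_prop) (by fun_prop) ?_)
  exact fun x hx' => pow_ne_zero 2 (hx x hx')

theorem sq_add_sq_sub_mul_pos {r h χ : ℝ} (hr : 0 ≤ r) (hh : 0 < h) (hχ : χ ≤ 1) :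
    0 < (r + h) ^ 2 + r ^ 2 - 2 * r * (r + h) * χ := by
  have hrest : 0 ≤ 2 * r * (r + h) * (1 - χ) := by
    have : 0 ≤ 1 - χ := by linarith
    positivity
  calc 0 < h ^ 2 + 2 * r * (r + h) * (1 - χ) := by positivity
    _ = _ := by ring

theorem tdoa_xy_integral_general
    (r h R ρ η χmax Dmax : ℝ)
    (hr : 0 < r) (hh : 0 < h) (hR : R = r + h)
    (hχ2 : χmax < 1)
    (hD : Dmax = Real.sqrt (R ^ 2 + r ^ 2 - 2 * r * R * χmax)) :
    ρ * η * R ^ 2 *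
        ∫ χ in χmax..1, (1 - χ ^ 2) / (R ^ 2 + r ^ 2 - 2 * r * R * χ) ^ 2
      = 2 * ρ * η *
          (Real.log (Dmax / h) * ((r + h) ^ 2 + r ^ 2) / (4 * r ^ 3 * (r + h))
            - (1 - χmax) * (Dmax ^ 2 + r * (r + h) * (1 + χmax)) /
                (4 * r ^ 2 * Dmax ^ 2)) := by
  subst hR
  have hpos : ∀ χ ≤ 1, 0 < (r + h) ^ 2 + r ^ 2 - 2 * r * (r + h) * χ :=
    fun _ hχ => sq_add_sq_sub_mul_pos hr.le hh hχ
  have hDsq : Dmax ^ 2 = (r + h) ^ 2 + r ^ 2 - 2 * r * (r + h) * χmax := by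
    rw [hD, sq_sqrt (hpos χmax hχ2.le).le]
  have hDpos : 0 < Dmax := hD ▸ sqrt_pos.mpr (hpos χmax hχ2.le)
  rw [integral_one_sub_sq_div_sq (by positivity) fun χ hχ =>
    (hpos χ (Set.uIcc_of_le hχ2.le ▸ hχ).2).ne']
  unfold primitiveOneSubSqDivSq
  rw [← hDsq, show (r + h) ^ 2 + r ^ 2 - 2 * r * (r + h) * 1 = h ^ 2 by ring, log_pow, log_pow,
    log_div hDpos.ne' hh.ne']
  field_simp
  rw [hDsq]
  ring

/-- closed form of the TDOA horizontal-FIM integral. -/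
theorem tdoa_xy_integral
    (r h R ρ η χmax Dmax : ℝ)
    (hr : 0 < r) (hh : 0 < h) (hR : R = r + h)
    (hρ : 0 < ρ) (hη : 0 < η)
    (hχ1 : -1 ≤ χmax) (hχ2 : χmax < 1)
    (hD : Dmax = Real.sqrt (R ^ 2 + r ^ 2 - 2 * r * R * χmax)) :
    ρ * η * R ^ 2 *
        ∫ χ in χmax..1, (1 - χ ^ 2) / (R ^ 2 + r ^ 2 - 2 * r * R * χ) ^ 2
      = 2 * ρ * η *
          (Real.log (Dmax / h) * ((r + h) ^ 2 + r ^ 2) / (4 * r ^ 3 * (r + h))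
            - (1 - χmax) * (Dmax ^ 2 + r * (r + h) * (1 + χmax)) /
                (4 * r ^ 2 * Dmax ^ 2)) :=
  tdoa_xy_integral_general r h R ρ η χmax Dmax hr hh hR hχ2 hD
end

section
/- Let r > 0 and ζ ∈ (0, 1), and for h > 0 define D_max(h) = √(h² + 2hr + r²ζ²) − rζ. Then as h → ∞, h³ · ( ln(D_max(h)/h) − r(1 − ζ)/h − r²(ζ − 1)/h² − r³(ζ³ − 9ζ + 8)/(6h³) ) tends to 0; that is, ln(D_max(h)/h) = −r(ζ − 1)/h + r²(ζ − 1)/h² + r³(ζ³ − 9ζ + 8)/(6h³) + o(h⁻³). -/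
/-!
Put `t = D_max(h) / h - 1`, which tends to `0⁺` like `r (1 - ζ) / h`. Solving
`(h (1 + t) + r ζ)² = h² + 2 h r + r² ζ²` for `h` gives
`h = 2 r (1 - ζ - ζ t) / (t (t + 2))`, and this substitution turns the quantity into a
square-root-free function of `t`: the cubic Taylor remainder of `log (1 + t)` divided by `t³`,
times a bounded factor, plus `t` times a rational function regular at `0`. Both terms tend to `0`.
-/

open Filter Topology

open Real Asymptotics

lemma Real.abs_log_one_add_sub_cubic_le {t : ℝ} (ht : |t| < 1) :
    |log (1 + t) - (t - t ^ 2 / 2 + t ^ 3 / 3)| ≤ |t| ^ 4 / (1 - |t|) := by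
  have h := abs_log_sub_add_sum_range_le (x := -t) (by rwa [abs_neg]) 3
  rw [abs_neg, sub_neg_eq_add] at h
  convert h using 2
  simp only [Finset.sum_range_succ, Finset.sum_range_zero]
  ring

lemma Real.log_one_add_sub_cubic_isLittleO :
    (fun t : ℝ => log (1 + t) - (t - t ^ 2 / 2 + t ^ 3 / 3)) =o[𝓝 0] fun t => t ^ 3 := by
  refine IsBigO.trans_isLittleO (g := fun t : ℝ => t ^ 4) ?_ (isLittleO_pow_pow (by norm_num))
  refine IsBigO.of_bound 2 ?_
  filter_upwards [Metric.ball_mem_nhds (0 : ℝ) (by norm_num : (0 : ℝ) < 1 / 2)] with t ht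
  rw [mem_ball_zero_iff, Real.norm_eq_abs] at ht
  calc ‖log (1 + t) - (t - t ^ 2 / 2 + t ^ 3 / 3)‖ ≤ |t| ^ 4 / (1 - |t|) :=
        abs_log_one_add_sub_cubic_le (by linarith)
    _ ≤ 2 * ‖t ^ 4‖ := by
        rw [norm_pow, Real.norm_eq_abs, div_le_iff₀ (by linarith)]
        nlinarith [pow_nonneg (abs_nonneg t) 4]

noncomputable def dMax (r ζ h : ℝ) : ℝ := √(h ^ 2 + 2 * h * r + r ^ 2 * ζ ^ 2) - r * ζ

noncomputable def excess (r ζ h : ℝ) : ℝ := dMax r ζ h / h - 1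

noncomputable def altitudeOfExcess (r ζ t : ℝ) : ℝ := 2 * r * (1 - ζ - ζ * t) / (t * (t + 2))

noncomputable def cubicRemainder (r ζ h y : ℝ) : ℝ :=
  h ^ 3 * (log y - r * (1 - ζ) / h - r ^ 2 * (ζ - 1) / h ^ 2
    - r ^ 3 * (ζ ^ 3 - 9 * ζ + 8) / (6 * h ^ 3))

noncomputable def rationalResidual (r ζ t : ℝ) : ℝ :=
  r ^ 3 * ((-14 - 2 * ζ + 10 * ζ ^ 2 - 2 * ζ ^ 3) + (-8 + 7 * ζ + 10 * ζ ^ 2 - 5 * ζ ^ 3) * t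
    + (-4 / 3 + 3 / 2 * ζ - 17 / 6 * ζ ^ 3) * t ^ 2) / (t + 2) ^ 3

section Substitution

variable (r ζ : ℝ)

/-- The coefficients of the expansion are exactly those for which the cubic Taylor polynomial of
`log (1 + t)`, rewritten in powers of `1 / altitudeOfExcess r ζ t`, cancels up to order `t³`. -/
lemma cubicRemainder_altitudeOfExcess {t : ℝ} (hr : r ≠ 0) (ht : t ≠ 0) (ht2 : t + 2 ≠ 0)
    (hζt : 1 - ζ - ζ * t ≠ 0) :
    cubicRemainder r ζ (altitudeOfExcess r ζ t) (1 + t) =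
      (log (1 + t) - (t - t ^ 2 / 2 + t ^ 3 / 3)) / t ^ 3
          * (2 * r * (1 - ζ - ζ * t) / (t + 2)) ^ 3
        + t * rationalResidual r ζ t := by
  unfold cubicRemainder altitudeOfExcess rationalResidual
  field_simp
  ring

lemma tendsto_cubicRemainder_altitudeOfExcess (hr : r ≠ 0) (hζ : ζ ≠ 1) :
    Tendsto (fun t => cubicRemainder r ζ (altitudeOfExcess r ζ t) (1 + t)) (𝓝[≠] 0)
      (𝓝 0) := by
  have hlog : Tendsto (fun t : ℝ => (log (1 + t) - (t - t ^ 2 / 2 + t ^ 3 / 3)) / t ^ 3)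
      (𝓝[≠] 0) (𝓝 0) :=
    log_one_add_sub_cubic_isLittleO.tendsto_div_nhds_zero.mono_left nhdsWithin_le_nhds
  have hcube : ContinuousAt (fun t : ℝ => (2 * r * (1 - ζ - ζ * t) / (t + 2)) ^ 3) 0 :=
    (ContinuousAt.div (by fun_prop) (by fun_prop) (by norm_num)).pow 3
  have hresidual : ContinuousAt (rationalResidual r ζ) 0 :=
    ContinuousAt.div (by fun_prop) (by fun_prop) (by norm_num)
  have hlim := (hlog.mul (hcube.tendsto.mono_left nhdsWithin_le_nhds)).add
    ((tendsto_id.mul hresidual.tendsto).mono_left nhdsWithin_le_nhds)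
  simp only [zero_mul, zero_add] at hlim
  refine hlim.congr' ?_
  have hζt : ∀ᶠ t in 𝓝 (0 : ℝ), 1 - ζ - ζ * t ≠ 0 ∧ t + 2 ≠ 0 :=
    (ContinuousAt.eventually_ne (by fun_prop) (by simpa [sub_eq_zero] using hζ.symm)).and
      (ContinuousAt.eventually_ne (by fun_prop) (by norm_num))
  filter_upwards [self_mem_nhdsWithin, nhdsWithin_le_nhds hζt] with t ht ⟨hζt, ht2⟩
  exact (cubicRemainder_altitudeOfExcess r ζ hr ht ht2 hζt).symm

end Substitution

section Excess

variable {r ζ : ℝ}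

lemma excess_mem_Ioc (hr : 0 < r) (hζ0 : 0 < ζ) (hζ1 : ζ < 1) {h : ℝ} (hh : 0 < h) :
    excess r ζ h ∈ Set.Ioc 0 (r / h) := by
  have hlower : h + r * ζ < √(h ^ 2 + 2 * h * r + r ^ 2 * ζ ^ 2) := by
    rw [lt_sqrt (by positivity)]
    nlinarith [mul_pos (mul_pos hh hr) (sub_pos.2 hζ1)]
  have hupper : √(h ^ 2 + 2 * h * r + r ^ 2 * ζ ^ 2) ≤ h + r + r * ζ := by
    rw [sqrt_le_left (by positivity)]
    nlinarith [mul_pos (mul_pos hh hr) hζ0, mul_pos hr hζ0]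
  unfold excess dMax
  constructor
  · rw [sub_pos, one_lt_div hh]
    linarith
  · rw [sub_le_iff_le_add, div_le_iff₀ hh, add_mul, div_mul_cancel₀ _ hh.ne']
    linarith

lemma altitudeOfExcess_excess {h : ℝ} (hh : 0 < h)
    (hrad : 0 ≤ h ^ 2 + 2 * h * r + r ^ 2 * ζ ^ 2) (ht : 0 < excess r ζ h) :
    altitudeOfExcess r ζ (excess r ζ h) = h := by
  have hs := sq_sqrt hrad
  unfold altitudeOfExcess
  rw [div_eq_iff (by positivity)]
  unfold excess dMax
  generalize √(h ^ 2 + 2 * h * r + r ^ 2 * ζ ^ 2) = s at hs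
  field_simp
  linear_combination -hs

lemma tendsto_excess (hr : 0 < r) (hζ0 : 0 < ζ) (hζ1 : ζ < 1) :
    Tendsto (excess r ζ) atTop (𝓝[>] 0) := by
  have hmem : ∀ᶠ h in atTop, excess r ζ h ∈ Set.Ioc 0 (r / h) := by
    filter_upwards [eventually_gt_atTop 0] with h hh
    exact excess_mem_Ioc hr hζ0 hζ1 hh
  refine tendsto_nhdsWithin_iff.2 ⟨?_, hmem.mono fun _ ht => ht.1⟩
  exact squeeze_zero' (hmem.mono fun _ ht => ht.1.le) (hmem.mono fun _ ht => ht.2)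
    (tendsto_const_nhds.div_atTop tendsto_id)

end Excess

/-- third-order asymptotic expansion of ln(D_max(h)/h) as h → ∞. -/
theorem log_Dmax_over_h_expansion
    (r ζ : ℝ) (hr : 0 < r) (hζ0 : 0 < ζ) (hζ1 : ζ < 1) :
    Tendsto
      (fun h : ℝ =>
        h ^ 3 *
          (Real.log ((Real.sqrt (h ^ 2 + 2 * h * r + r ^ 2 * ζ ^ 2) - r * ζ) / h)
            - r * (1 - ζ) / h
            - r ^ 2 * (ζ - 1) / h ^ 2
            - r ^ 3 * (ζ ^ 3 - 9 * ζ + 8) / (6 * h ^ 3)))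
      atTop (𝓝 0) := by
  change Tendsto (fun h => cubicRemainder r ζ h (dMax r ζ h / h)) atTop (𝓝 0)
  have hsubst : ∀ᶠ h in atTop, cubicRemainder r ζ (altitudeOfExcess r ζ (excess r ζ h))
      (1 + excess r ζ h) = cubicRemainder r ζ h (dMax r ζ h / h) := by
    filter_upwards [eventually_gt_atTop 0] with h hh
    rw [altitudeOfExcess_excess hh (by positivity) (excess_mem_Ioc hr hζ0 hζ1 hh).1, excess,
      add_sub_cancel]
  have hexcess : Tendsto (excess r ζ) atTop (𝓝[≠] 0) :=
    tendsto_nhdsWithin_mono_right (fun _ ht => ne_of_gt ht) (tendsto_excess hr hζ0 hζ1)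
  exact ((tendsto_cubicRemainder_altitudeOfExcess r ζ hr.ne' hζ1.ne).comp hexcess).congr' hsubst
end

section
/- Let r > 0, ζ ∈ (0, 1), ρ > 0, η > 0 and N > 0. For h > 0 set D_max(h) = √(h² + 2hr + r²ζ²) − rζ and define ACRB_z(h) = [ ηρN ( (r + h − rζ² − ζ·D_max(h))/(2(r + h)r²) − h(2r + h)·ln(D_max(h)/h)/(2r³(r + h)) − (r + h − (r(h − D_max(h)·ζ) + h(r + h))/D_max(h))² / (r³(r + h)·ln(D_max(h)/h)) ) ]⁻¹. Then lim_{h → 0⁺} ACRB_z(h) = [ ηρN ( (1 − ζ²)/(2r²) + (1 − ζ)²/(r²·ln ζ) ) ]⁻¹. -/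
open Filter Topology

/-!
Rationalising gives `D_max(h) (D_max(h) + 2rζ) = h (h + 2r)`. Hence
`D_max(h) / h = (h + 2r) / (D_max(h) + 2rζ) → 1/ζ`, removing the `0/0` inside the logarithm, and
`(r(h − D_max ζ) + h(r + h)) / D_max = D_max + rζ`. The bracket of `ACRB_z` thereby becomes a
continuous function of `h`, `D_max(h)` and `ln(D_max(h)/h)` near `(0, 0, −ln ζ)`; its value there is
positive because `ln x > 2(x − 1)/(x + 1)` for `x = 1/ζ > 1`, so the reciprocal passes to the limit.
-/

theorem Real.two_mul_sub_one_div_add_one_lt_log {x : ℝ} (hx : 1 < x) :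
    2 * (x - 1) / (x + 1) < Real.log x := by
  set y := (x - 1) / (x + 1) with hy
  have hy0 : 0 < y := div_pos (by linarith) (by linarith)
  have hy1 : y < 1 := (div_lt_one (by linarith)).2 (by linarith)
  have hratio : (1 + y) / (1 - y) = x := by
    rw [hy]
    field_simp
    ring
  have hseries := Real.sum_range_le_log_div hy0.le hy1 2
  rw [hratio] at hseries
  norm_num [Finset.sum_range_succ] at hseries
  have : 0 < y ^ 3 / 3 := by positivity
  rw [mul_div_assoc]
  linarith

noncomputable def maxSlantRange (r ζ h : ℝ) : ℝ :=
  √(h ^ 2 + 2 * h * r + r ^ 2 * ζ ^ 2) - r * ζ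

section maxSlantRange

variable {r ζ h : ℝ}

theorem continuous_maxSlantRange : Continuous (maxSlantRange r ζ) := by
  unfold maxSlantRange
  fun_prop

theorem maxSlantRange_zero (hrζ : 0 ≤ r * ζ) : maxSlantRange r ζ 0 = 0 := by
  simp [maxSlantRange, ← mul_pow, Real.sqrt_sq hrζ]

theorem maxSlantRange_mul_add (hr : 0 ≤ r) (hh : 0 ≤ h) :
    maxSlantRange r ζ h * (maxSlantRange r ζ h + 2 * r * ζ) = h * (h + 2 * r) := by
  have hsq := Real.sq_sqrt (show 0 ≤ h ^ 2 + 2 * h * r + r ^ 2 * ζ ^ 2 by positivity)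
  unfold maxSlantRange
  linear_combination hsq

theorem maxSlantRange_pos (hr : 0 < r) (hζ : 0 ≤ ζ) (hh : 0 < h) :
    0 < maxSlantRange r ζ h := by
  rw [maxSlantRange, sub_pos, Real.lt_sqrt (by positivity)]
  nlinarith

theorem maxSlantRange_div_self (hr : 0 < r) (hζ : 0 ≤ ζ) (hh : 0 < h) :
    maxSlantRange r ζ h / h = (h + 2 * r) / (maxSlantRange r ζ h + 2 * r * ζ) := by
  have hD := maxSlantRange_pos hr hζ hh
  rw [div_eq_div_iff hh.ne' (by positivity)]
  linear_combination maxSlantRange_mul_add hr.le hh.le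

theorem tendsto_maxSlantRange_div_self (hr : 0 < r) (hζ : 0 < ζ) :
    Tendsto (fun h => maxSlantRange r ζ h / h) (𝓝[>] 0) (𝓝 ζ⁻¹) := by
  have hD0 := maxSlantRange_zero (r := r) (mul_pos hr hζ).le
  have hcont : ContinuousAt (fun h => (h + 2 * r) / (maxSlantRange r ζ h + 2 * r * ζ)) 0 := by
    refine ContinuousAt.div (by fun_prop) (continuous_maxSlantRange.continuousAt.add
      continuousAt_const) ?_
    rw [hD0]
    positivity
  have hval : (0 + 2 * r) / (maxSlantRange r ζ 0 + 2 * r * ζ) = ζ⁻¹ := by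
    rw [hD0]
    field_simp
    ring
  rw [← hval]
  refine (hcont.tendsto.mono_left nhdsWithin_le_nhds).congr' ?_
  filter_upwards [self_mem_nhdsWithin] with h hh
  exact (maxSlantRange_div_self hr hζ.le hh).symm

theorem div_maxSlantRange_eq_add (hr : 0 < r) (hζ : 0 ≤ ζ) (hh : 0 < h) :
    (r * (h - maxSlantRange r ζ h * ζ) + h * (r + h)) / maxSlantRange r ζ h =
      maxSlantRange r ζ h + r * ζ := by
  rw [div_eq_iff (maxSlantRange_pos hr hζ hh).ne']
  linear_combination -maxSlantRange_mul_add hr.le hh.le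

end maxSlantRange

/-- The bracket of `ACRB_z`, with `D = D_max(h)`, `L = ln(D/h)`, and the fraction
`(r(h − Dζ) + h(r + h))/D` already simplified to `D + rζ`. -/
noncomputable def acrbZBracket (r ζ h D L : ℝ) : ℝ :=
  (r + h - r * ζ ^ 2 - ζ * D) / (2 * (r + h) * r ^ 2)
    - h * (2 * r + h) * L / (2 * r ^ 3 * (r + h))
    - (r + h - (D + r * ζ)) ^ 2 / (r ^ 3 * (r + h) * L)

section acrbZBracket

variable {r ζ L : ℝ}

theorem continuousAt_acrbZBracket (hr : r ≠ 0) (hL : L ≠ 0) :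
    ContinuousAt (fun p : ℝ × ℝ × ℝ => acrbZBracket r ζ p.1 p.2.1 p.2.2) (0, 0, L) := by
  unfold acrbZBracket
  fun_prop (disch := simp [hr, hL])

theorem acrbZBracket_zero_zero_neg_log (hr : r ≠ 0) (hζ : Real.log ζ ≠ 0) :
    acrbZBracket r ζ 0 0 (-Real.log ζ) =
      (1 - ζ ^ 2) / (2 * r ^ 2) + (1 - ζ) ^ 2 / (r ^ 2 * Real.log ζ) := by
  unfold acrbZBracket
  simp only [add_zero, zero_mul, mul_zero, zero_div, sub_zero]
  field_simp
  ring

theorem acrbZBracket_zero_zero_neg_log_pos (hr : r ≠ 0) (hζ0 : 0 < ζ) (hζ1 : ζ < 1) :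
    0 < acrbZBracket r ζ 0 0 (-Real.log ζ) := by
  have hlog : 0 < -Real.log ζ := neg_pos.2 (Real.log_neg hζ0 hζ1)
  have hlog_ne : Real.log ζ ≠ 0 := neg_ne_zero.1 hlog.ne'
  have hineq : 2 * (1 - ζ) < (1 + ζ) * -Real.log ζ := by
    have := Real.two_mul_sub_one_div_add_one_lt_log (one_lt_inv_iff₀.2 ⟨hζ0, hζ1⟩)
    rw [Real.log_inv, div_lt_iff₀ (by positivity)] at this
    field_simp at this
    linarith
  have hfactor : acrbZBracket r ζ 0 0 (-Real.log ζ) =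
      (1 - ζ) * ((1 + ζ) * -Real.log ζ - 2 * (1 - ζ)) / (2 * r ^ 2 * -Real.log ζ) := by
    rw [acrbZBracket_zero_zero_neg_log hr hlog_ne]
    field_simp
    ring
  rw [hfactor]
  have : 0 < 1 - ζ := by linarith
  have : 0 < (1 + ζ) * -Real.log ζ - 2 * (1 - ζ) := by linarith
  positivity

end acrbZBracket

/-- lim_{h → 0⁺} ACRB_z(h) = (ηρN((1 − ζ²)/(2r²) + (1 − ζ)²/(r²·ln ζ)))⁻¹. -/
theorem ACRB_z_limit_at_zero
    (r ζ ρ η N : ℝ) (hr : 0 < r) (hζ0 : 0 < ζ) (hζ1 : ζ < 1)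
    (hρ : 0 < ρ) (hη : 0 < η) (hN : 0 < N) :
    Tendsto
      (fun h : ℝ =>
        let D := Real.sqrt (h ^ 2 + 2 * h * r + r ^ 2 * ζ ^ 2) - r * ζ
        (η * ρ * N *
          ((r + h - r * ζ ^ 2 - ζ * D) / (2 * (r + h) * r ^ 2)
            - h * (2 * r + h) * Real.log (D / h) / (2 * r ^ 3 * (r + h))
            - (r + h - (r * (h - D * ζ) + h * (r + h)) / D) ^ 2 /
                (r ^ 3 * (r + h) * Real.log (D / h))))⁻¹)
      (𝓝[>] 0)
      (𝓝 ((η * ρ * N *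
            ((1 - ζ ^ 2) / (2 * r ^ 2)
              + (1 - ζ) ^ 2 / (r ^ 2 * Real.log ζ)))⁻¹)) := by
  have hlogζ : Real.log ζ ≠ 0 := (Real.log_neg hζ0 hζ1).ne
  have hD : Tendsto (maxSlantRange r ζ) (𝓝[>] 0) (𝓝 0) :=
    (continuous_maxSlantRange.tendsto' 0 0 (maxSlantRange_zero (mul_pos hr hζ0).le)).mono_left
      nhdsWithin_le_nhds
  have hL : Tendsto (fun h => Real.log (maxSlantRange r ζ h / h)) (𝓝[>] 0) (𝓝 (-Real.log ζ)) := by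
    rw [← Real.log_inv]
    exact (tendsto_maxSlantRange_div_self hr hζ0).log (inv_ne_zero hζ0.ne')
  have hbracket := (continuousAt_acrbZBracket (ζ := ζ) hr.ne' (neg_ne_zero.2 hlogζ)).tendsto.comp
    (tendsto_nhdsWithin_of_tendsto_nhds tendsto_id |>.prodMk_nhds (hD.prodMk_nhds hL))
  rw [← acrbZBracket_zero_zero_neg_log hr.ne' hlogζ]
  refine ((hbracket.const_mul (η * ρ * N)).inv₀ ?_).congr' ?_
  · exact (mul_pos (by positivity) (acrbZBracket_zero_zero_neg_log_pos hr.ne' hζ0 hζ1)).ne'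
  filter_upwards [self_mem_nhdsWithin] with h hh
  dsimp only
  rw [← maxSlantRange.eq_1, div_maxSlantRange_eq_add hr hζ0.le hh]
  rfl
end

section
/- Let r > 0, ζ ∈ (0, 1), ρ > 0, η > 0 and N > 0. For h > 0 set D_max(h) = √(h² + 2hr + r²ζ²) − rζ and define ACRB_xy(h) = 4(r + h) / [ ρηN ( ln(D_max(h)/h)·((r + h)² + r²)/(2r³) − (h − D_max(h)·ζ)·((r + h)² + r(r + h − D_max(h)·ζ))/(2r² D_max(h)²) ) ]. Then lim_{h → ∞} ACRB_xy(h)/h² = 12 / ( ρηN (ζ + 2)(1 − ζ)² ). -/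
open Filter Topology

noncomputable def Dfun (r ζ h : ℝ) : ℝ := Real.sqrt (h ^ 2 + 2 * h * r + r ^ 2 * ζ ^ 2) - r * ζ
noncomputable def Hfun (r ζ t : ℝ) : ℝ := 2*r*(1-ζ*t)/(t^2-1)
noncomputable def Bh (r ζ h D : ℝ) : ℝ :=
  (Real.log (D / h) * ((r + h) ^ 2 + r ^ 2) / (2 * r ^ 3)
    - (h - D * ζ) * ((r + h) ^ 2 + r * (r + h - D * ζ)) / (2 * r ^ 2 * D ^ 2)) * h
noncomputable def Phi (r ζ t : ℝ) : ℝ := Bh r ζ (Hfun r ζ t) (t * Hfun r ζ t)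
noncomputable def cfun (r ζ t : ℝ) : ℝ := ((r + Hfun r ζ t)^2 + r^2)/(2*r^3) * Hfun r ζ t
noncomputable def Sfun (r ζ t : ℝ) : ℝ :=
  (Hfun r ζ t - (t*Hfun r ζ t)*ζ) * ((r + Hfun r ζ t)^2 + r*(r + Hfun r ζ t - (t*Hfun r ζ t)*ζ)) /
    (2*r^2*(t*Hfun r ζ t)^2) * Hfun r ζ t
noncomputable def pcube (t : ℝ) : ℝ := (t-1) - (t-1)^2/2 + (t-1)^3/3
noncomputable def Qfun (ζ t : ℝ) : ℝ :=
  (1 - ζ*t) * (256-128*ζ-128*ζ^2 + (176-160*ζ-16*ζ^2)*(t-1) + (96-96*ζ+64*ζ^2)*(t-1)^2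
    + (80-64*ζ)*(t-1)^3 + 32*(t-1)^4) / (48*(t+1)^3)

lemma key_identity (r ζ t : ℝ) (hr : r ≠ 0) (ht1 : 1 < t) (hζt : ζ * t < 1) :
    pcube t * cfun r ζ t - Sfun r ζ t = Qfun ζ t := by
  have h1 : t - 1 ≠ 0 := by linarith
  have h2 : t + 1 ≠ 0 := by linarith
  have h3 : t ≠ 0 := by linarith
  have h4 : 1 - ζ*t ≠ 0 := by linarith
  have h5 : t^2 - 1 ≠ 0 := by intro h; apply h1; nlinarith
  unfold pcube cfun Sfun Qfun Hfun
  field_simp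
  ring

/-- Basic facts about `Dfun`. -/
lemma D_facts (r ζ h : ℝ) (hr : 0 < r) (hζ0 : 0 < ζ) (hζ1 : ζ < 1) (hh : 0 < h) :
    h < Dfun r ζ h ∧ Dfun r ζ h ≤ h + r ∧
      (Dfun r ζ h)^2 + 2*(r*ζ)*(Dfun r ζ h) = h^2 + 2*r*h := by
  have hin : (0:ℝ) ≤ h ^ 2 + 2 * h * r + r ^ 2 * ζ ^ 2 := by positivity
  have hs2 : (Real.sqrt (h ^ 2 + 2 * h * r + r ^ 2 * ζ ^ 2))^2
      = h ^ 2 + 2 * h * r + r ^ 2 * ζ ^ 2 := Real.sq_sqrt hin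
  set s := Real.sqrt (h ^ 2 + 2 * h * r + r ^ 2 * ζ ^ 2) with hs
  refine ⟨?_, ?_, ?_⟩
  · have : h + r*ζ < s := by
      rw [hs, show h + r*ζ = h + r*ζ from rfl]
      rw [Real.lt_sqrt (by positivity)]
      nlinarith [mul_pos (mul_pos hh hr) (sub_pos.2 hζ1)]
    unfold Dfun; rw [← hs]; linarith
  · have : s ≤ h + r + r*ζ := by
      have h1 : h ^ 2 + 2 * h * r + r ^ 2 * ζ ^ 2 ≤ (h + r + r*ζ)^2 := by
        nlinarith [mul_nonneg (mul_nonneg hh.le hr.le) hζ0.le,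
          mul_nonneg (mul_nonneg hr.le hr.le) hζ0.le, sq_nonneg r]
      calc s ≤ Real.sqrt ((h + r + r*ζ)^2) := Real.sqrt_le_sqrt h1
        _ = h + r + r*ζ := Real.sqrt_sq (by positivity)
    unfold Dfun; rw [← hs]; linarith
  · unfold Dfun; rw [← hs]; nlinarith [hs2]

lemma H_of_t (r ζ h : ℝ) (hh : 0 < h) (hgt : h < Dfun r ζ h)
    (key : (Dfun r ζ h)^2 + 2*(r*ζ)*(Dfun r ζ h) = h^2 + 2*r*h) :
    Hfun r ζ (Dfun r ζ h / h) = h := by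
  set D := Dfun r ζ h with hD
  have hD0 : 0 < D := lt_trans hh hgt
  have hne : (D/h)^2 - 1 ≠ 0 := by
    have : 1 < D/h := (one_lt_div hh).2 hgt
    nlinarith
  unfold Hfun
  rw [div_eq_iff hne]
  field_simp
  nlinarith [key]

set_option maxHeartbeats 2000000 in
/-- The limit of `Phi` as `t → 1⁺`. -/
lemma Phi_tendsto (r ζ : ℝ) (hr : 0 < r) (hζ0 : 0 < ζ) (hζ1 : ζ < 1) :
    Tendsto (Phi r ζ) (𝓝[>] (1:ℝ)) (𝓝 ((ζ+2)*(1-ζ)^2/3)) := by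
  set ε : ℝ := min ((1-ζ)/(2*ζ)) (1/2) with hε
  have hε0 : 0 < ε := by
    apply lt_min
    · apply div_pos (by linarith) (by linarith)
    · norm_num
  have hmem : Set.Ioo (1:ℝ) (1+ε) ∈ 𝓝[>] (1:ℝ) :=
    Ioo_mem_nhdsGT_of_mem ⟨le_refl _, by linarith⟩
  -- facts on the interval
  have hfacts : ∀ t ∈ Set.Ioo (1:ℝ) (1+ε), 1 < t ∧ t - 1 ≤ 1/2 ∧ ζ * t < (1+ζ)/2 := by
    intro t ht
    obtain ⟨ht1, ht2⟩ := ht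
    have l1 : t - 1 ≤ 1/2 := by
      have := min_le_right ((1-ζ)/(2*ζ)) (1/2); rw [← hε] at this; linarith
    have l2 : t - 1 < (1-ζ)/(2*ζ) + 1 := by
      have := min_le_left ((1-ζ)/(2*ζ)) (1/2); rw [← hε] at this; linarith
    have l3 : ζ * t < (1+ζ)/2 := by
      have h2 : t - 1 < (1-ζ)/(2*ζ) := by
        have := min_le_left ((1-ζ)/(2*ζ)) (1/2); rw [← hε] at this; linarith
      have : ζ * (t - 1) < ζ * ((1-ζ)/(2*ζ)) := by
        exact mul_lt_mul_of_pos_left h2 hζ0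
      have he : ζ * ((1-ζ)/(2*ζ)) = (1-ζ)/2 := by field_simp
      rw [he] at this
      nlinarith
    exact ⟨ht1, l1, l3⟩
  -- decomposition identity on the interval
  have hdecomp : ∀ t ∈ Set.Ioo (1:ℝ) (1+ε),
      Phi r ζ t = (Real.log t - pcube t) * cfun r ζ t + Qfun ζ t := by
    intro t ht
    obtain ⟨ht1, ht12, hζt⟩ := hfacts t ht
    have hζt1 : ζ * t < 1 := by linarith
    have hHpos : 0 < Hfun r ζ t := by
      unfold Hfun
      apply div_pos
      · nlinarith
      · nlinarith
    have hlog : (t * Hfun r ζ t) / Hfun r ζ t = t := by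
      field_simp
    have h1 : Phi r ζ t = Real.log t * cfun r ζ t - Sfun r ζ t := by
      unfold Phi Bh cfun Sfun
      rw [hlog]
      ring
    rw [h1, ← key_identity r ζ t (ne_of_gt hr) ht1 hζt1]
    ring
  -- the error term tends to 0
  have herr : Tendsto (fun t => (Real.log t - pcube t) * cfun r ζ t) (𝓝[>] (1:ℝ)) (𝓝 0) := by
    apply squeeze_zero_norm' (a := fun t => 5*(t-1))
    · filter_upwards [hmem] with t ht
      obtain ⟨ht1, ht12, hζt⟩ := hfacts t ht
      have hζt1 : ζ * t < 1 := by linarith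
      have hu0 : 0 < t - 1 := by linarith
      -- log error bound
      have hx : |1 - t| < 1 := by rw [abs_of_nonpos (by linarith)]; linarith
      have hb := Real.abs_log_sub_add_sum_range_le hx 3
      have hsum : (∑ i ∈ Finset.range 3, (1-t) ^ (i + 1) / (i + 1)) + Real.log (1 - (1-t))
          = Real.log t - pcube t := by
        rw [Finset.sum_range_succ, Finset.sum_range_succ, Finset.sum_range_succ,
          Finset.sum_range_zero]
        have : (1:ℝ) - (1 - t) = t := by ring
        rw [this]
        unfold pcube
        push_cast
        ring
      rw [hsum] at hb
      have habs : |1 - t| = t - 1 := by rw [abs_of_nonpos (by linarith)]; ring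
      rw [habs] at hb
      have hlogb : |Real.log t - pcube t| ≤ 2*(t-1)^4 := by
        have h2 : (1:ℝ)/2 ≤ 1 - (t-1) := by linarith
        have h3 : (t-1)^4 / (1 - (t-1)) ≤ 2*(t-1)^4 := by
          rw [div_le_iff₀ (by linarith)]
          nlinarith [pow_pos hu0 4]
        linarith
      -- bounds on cfun
      have hHpos : 0 < Hfun r ζ t := by
        unfold Hfun; apply div_pos; nlinarith; nlinarith
      have hHle : Hfun r ζ t * (t-1) ≤ r := by
        unfold Hfun
        rw [div_mul_eq_mul_div, div_le_iff₀ (by nlinarith)]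
        have hζtpos : 0 < 1 - ζ*t := by linarith
        have hkey : 0 < t - 1 + 2*(ζ*t) := by nlinarith
        nlinarith [mul_pos (mul_pos hr hu0) hkey]
      have hcpos : 0 < cfun r ζ t := by
        unfold cfun
        apply mul_pos _ hHpos
        apply div_pos
        · nlinarith [sq_nonneg (r + Hfun r ζ t), pow_pos hr 2]
        · nlinarith [pow_pos hr 3]
      have hcb : cfun r ζ t * (t-1)^3 ≤ 5/4 := by
        unfold cfun
        have e1 : ((r + Hfun r ζ t) ^ 2 + r ^ 2) / (2 * r ^ 3) * Hfun r ζ t * (t - 1) ^ 3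
            = ((r*(t-1) + Hfun r ζ t * (t-1))^2 + (r*(t-1))^2) * (Hfun r ζ t * (t-1))
              / (2*r^3) := by
          have hr' : r ≠ 0 := ne_of_gt hr
          field_simp
        rw [e1]
        rw [div_le_iff₀ (by positivity)]
        have hrt : r * (t-1) ≤ r * (1/2) := by nlinarith
        have hH1 : 0 < Hfun r ζ t * (t-1) := mul_pos hHpos hu0
        have ha0 : 0 < r * (t-1) := mul_pos hr hu0
        have hab : r*(t-1) + Hfun r ζ t * (t-1) ≤ 3/2*r := by linarith
        have hsq : (r*(t-1) + Hfun r ζ t * (t-1))^2 ≤ 9/4*r^2 := by nlinarith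
        have ha2 : (r*(t-1))^2 ≤ 1/4*r^2 := by nlinarith
        have hfin : ((r*(t-1) + Hfun r ζ t * (t-1))^2 + (r*(t-1))^2) * (Hfun r ζ t * (t-1))
            ≤ (5/2*r^2) * r := by
          apply mul_le_mul (by linarith) hHle hH1.le (by nlinarith)
        nlinarith [hfin]
      -- combine
      rw [Real.norm_eq_abs]
      have : |(Real.log t - pcube t) * cfun r ζ t|
          = |Real.log t - pcube t| * cfun r ζ t := by
        rw [abs_mul, abs_of_pos hcpos]
      rw [this]
      have step : |Real.log t - pcube t| * cfun r ζ t ≤ 2*(t-1)^4 * cfun r ζ t :=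
        mul_le_mul_of_nonneg_right hlogb hcpos.le
      have step2 : 2*(t-1)^4 * cfun r ζ t = 2*(t-1) * (cfun r ζ t * (t-1)^3) := by ring
      have step3 : 2*(t-1) * (cfun r ζ t * (t-1)^3) ≤ 2*(t-1) * (5/4) := by
        apply mul_le_mul_of_nonneg_left hcb (by linarith)
      calc |Real.log t - pcube t| * cfun r ζ t ≤ 2*(t-1) * (5/4) := by
            rw [step2] at step; linarith
        _ ≤ 5*(t-1) := by linarith
    · have h0 : Tendsto (fun t : ℝ => t - 1) (𝓝 (1:ℝ)) (𝓝 (1 - 1)) :=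
        tendsto_id.sub tendsto_const_nhds
      have h1 : Tendsto (fun t : ℝ => 5*(t-1)) (𝓝 (1:ℝ)) (𝓝 (5*(1-1))) :=
        tendsto_const_nhds.mul h0
      have h2 : Tendsto (fun t : ℝ => 5*(t-1)) (𝓝 (1:ℝ)) (𝓝 0) := by simpa using h1
      exact h2.mono_left nhdsWithin_le_nhds
  -- Q tends to the limit
  have hQ : Tendsto (Qfun ζ) (𝓝[>] (1:ℝ)) (𝓝 ((ζ+2)*(1-ζ)^2/3)) := by
    have hc : ContinuousAt (Qfun ζ) 1 := by
      unfold Qfun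
      apply ContinuousAt.div
      · fun_prop
      · fun_prop
      · norm_num
    have hval : Qfun ζ 1 = (ζ+2)*(1-ζ)^2/3 := by
      unfold Qfun
      norm_num
      ring
    have := hc.tendsto.mono_left (nhdsWithin_le_nhds (s := Set.Ioi (1:ℝ)))
    rwa [hval] at this
  -- combine
  have : Tendsto (fun t => (Real.log t - pcube t) * cfun r ζ t + Qfun ζ t)
      (𝓝[>] (1:ℝ)) (𝓝 ((ζ+2)*(1-ζ)^2/3)) := by
    have := herr.add hQ
    simpa using this
  exact this.congr' (by filter_upwards [hmem] with t ht using (hdecomp t ht).symm)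

/-- lim_{h → ∞} ACRB_xy(h)/h² = 12 / (ρηN(ζ + 2)(1 − ζ)²). -/
theorem ACRB_xy_limit_atTop
    (r ζ ρ η N : ℝ) (hr : 0 < r) (hζ0 : 0 < ζ) (hζ1 : ζ < 1)
    (hρ : 0 < ρ) (hη : 0 < η) (hN : 0 < N) :
    Tendsto
      (fun h : ℝ =>
        let D := Real.sqrt (h ^ 2 + 2 * h * r + r ^ 2 * ζ ^ 2) - r * ζ
        (4 * (r + h) /
          (ρ * η * N *
            (Real.log (D / h) * ((r + h) ^ 2 + r ^ 2) / (2 * r ^ 3)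
              - (h - D * ζ) * ((r + h) ^ 2 + r * (r + h - D * ζ)) /
                  (2 * r ^ 2 * D ^ 2)))) / h ^ 2)
      atTop
      (𝓝 (12 / (ρ * η * N * (ζ + 2) * (1 - ζ) ^ 2))) := by
  set M : ℝ := (ζ+2)*(1-ζ)^2/3 with hM
  have hMpos : 0 < M := by
    rw [hM]
    exact div_pos (mul_pos (by linarith) (pow_pos (by linarith) 2)) (by norm_num)
  have hh0 : ∀ᶠ h : ℝ in atTop, max 1 (r*ζ/(1-ζ) + 1) ≤ h := eventually_ge_atTop _
  -- t(h) → 1⁺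
  have httend : Tendsto (fun h : ℝ => Dfun r ζ h / h) atTop (𝓝[>] (1:ℝ)) := by
    rw [tendsto_nhdsWithin_iff]
    constructor
    · apply tendsto_of_tendsto_of_tendsto_of_le_of_le' (g := fun _ : ℝ => (1:ℝ))
        (h := fun h : ℝ => 1 + r/h) tendsto_const_nhds
      · have : Tendsto (fun h : ℝ => 1 + r/h) atTop (𝓝 (1 + 0)) :=
          tendsto_const_nhds.add (tendsto_const_nhds.div_atTop tendsto_id)
        simpa using this
      · filter_upwards [eventually_gt_atTop (0:ℝ)] with h hh
        obtain ⟨h1, _, _⟩ := D_facts r ζ h hr hζ0 hζ1 hh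
        exact le_of_lt ((one_lt_div hh).2 h1)
      · filter_upwards [eventually_gt_atTop (0:ℝ)] with h hh
        obtain ⟨_, h2, _⟩ := D_facts r ζ h hr hζ0 hζ1 hh
        rw [div_le_iff₀ hh]
        calc Dfun r ζ h ≤ h + r := h2
          _ = (1 + r/h) * h := by field_simp
    · filter_upwards [eventually_gt_atTop (0:ℝ)] with h hh
      obtain ⟨h1, _, _⟩ := D_facts r ζ h hr hζ0 hζ1 hh
      exact (one_lt_div hh).2 h1
  -- B·h → M
  have hBtend : Tendsto (fun h : ℝ => Bh r ζ h (Dfun r ζ h)) atTop (𝓝 M) := by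
    have hcomp := (Phi_tendsto r ζ hr hζ0 hζ1).comp httend
    rw [← hM] at hcomp
    apply hcomp.congr'
    filter_upwards [hh0] with h hh
    have hhpos : 0 < h := lt_of_lt_of_le one_pos ((le_max_left _ _).trans hh)
    obtain ⟨h1, h2, key⟩ := D_facts r ζ h hr hζ0 hζ1 hhpos
    have hH : Hfun r ζ (Dfun r ζ h / h) = h := H_of_t r ζ h hhpos h1 key
    show Phi r ζ (Dfun r ζ h / h) = Bh r ζ h (Dfun r ζ h)
    unfold Phi
    rw [hH, div_mul_cancel₀ _ (ne_of_gt hhpos)]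
  -- numerator → 4
  have hnum : Tendsto (fun h : ℝ => 4*(r+h)/h) atTop (𝓝 4) := by
    have h1 : Tendsto (fun h : ℝ => 4*(r/h) + 4) atTop (𝓝 (4*0 + 4)) :=
      (tendsto_const_nhds.mul (tendsto_const_nhds.div_atTop tendsto_id)).add tendsto_const_nhds
    have h2 : Tendsto (fun h : ℝ => 4*(r/h) + 4) atTop (𝓝 4) := by simpa using h1
    apply h2.congr'
    filter_upwards [eventually_gt_atTop (0:ℝ)] with h hh
    field_simp
  have hden : Tendsto (fun h : ℝ => ρ*η*N*(Bh r ζ h (Dfun r ζ h))) atTop (𝓝 (ρ*η*N*M)) :=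
    tendsto_const_nhds.mul hBtend
  have hne : ρ*η*N*M ≠ 0 := ne_of_gt (mul_pos (by positivity) hMpos)
  have hfinal := hnum.div hden hne
  have hval : 4/(ρ*η*N*M) = 12 / (ρ * η * N * (ζ + 2) * (1 - ζ) ^ 2) := by
    have hA : (0:ℝ) < ζ + 2 := by linarith
    have hB : (0:ℝ) < (1 - ζ)^2 := pow_pos (by linarith) 2
    rw [hM]
    rw [div_eq_div_iff
      (mul_pos (mul_pos (mul_pos hρ hη) hN) (div_pos (mul_pos hA hB) (by norm_num))).ne'
      (mul_pos (mul_pos (mul_pos (mul_pos hρ hη) hN) hA) hB).ne']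
    ring
  rw [hval] at hfinal
  refine hfinal.congr (fun h => ?_)
  show 4 * (r + h) / h / (ρ * η * N * Bh r ζ h (Dfun r ζ h))
      = 4 * (r + h) /
          (ρ * η * N *
            (Real.log (Dfun r ζ h / h) * ((r + h) ^ 2 + r ^ 2) / (2 * r ^ 3)
              - (h - Dfun r ζ h * ζ) * ((r + h) ^ 2 + r * (r + h - Dfun r ζ h * ζ)) /
                  (2 * r ^ 2 * (Dfun r ζ h) ^ 2))) / h ^ 2
  unfold Bh
  generalize (Real.log (Dfun r ζ h / h) * ((r + h) ^ 2 + r ^ 2) / (2 * r ^ 3)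
              - (h - Dfun r ζ h * ζ) * ((r + h) ^ 2 + r * (r + h - Dfun r ζ h * ζ)) /
                  (2 * r ^ 2 * (Dfun r ζ h) ^ 2)) = B
  ring
end
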